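/- Let (X,μ) be a measure space, 1 ≤ p < ∞, and (f_n) a sequence of measurable functions with f_n → f a.e. and (f_n) bounded in L^p_μ(X). Then the limit lim_{n→∞} (‖f_n‖_{L^p_μ}^p − ‖f − f_n‖_{L^p_μ}^p) exists and equals ‖f‖_{L^p_μ}^p. -/

import Mathlib

/-!
Pointwise, `||a + b|^p - |a|^p| ≤ ε |a|^p + C_ε |b|^p` for every `ε > 0`: for `|b| < δ |a|` this
is continuity of `t ↦ |1 + t|^p` at `0`, otherwise `|a|^p` is dominated by `|b|^p`. Applied with
`a = f_n - g` and `b = g`, it bounds the integrand `|f_n|^p - |g - f_n|^p - |g|^p`, which tends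
to `0` a.e., by `ε |g - f_n|^p` plus an integrable function independent of `n`. As
`∫ |g - f_n|^p` stays bounded, dominated convergence up to an error of order `ε` shows that the
integral of this integrand tends to `0`. Integrability of `|g|^p` is Fatou's lemma.
-/

open MeasureTheory Filter Topology

lemma abs_add_rpow_le {p : ℝ} (hp : 0 ≤ p) (x y : ℝ) :
    |x + y| ^ p ≤ 2 ^ p * (|x| ^ p + |y| ^ p) := calc
  |x + y| ^ p ≤ (2 * max |x| |y|) ^ p := by
    gcongr
    exact (abs_add_le x y).trans (by rw [two_mul]; gcongr <;> simp)
  _ = 2 ^ p * max (|x| ^ p) (|y| ^ p) := by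
    rw [Real.mul_rpow zero_le_two (by positivity), Real.rpow_max (abs_nonneg x) (abs_nonneg y) hp]
  _ ≤ 2 ^ p * (|x| ^ p + |y| ^ p) := by
    gcongr
    exact max_le_add_of_nonneg (by positivity) (by positivity)

lemma abs_sub_rpow_le {p : ℝ} (hp : 0 ≤ p) (x y : ℝ) :
    |x - y| ^ p ≤ 2 ^ p * (|x| ^ p + |y| ^ p) := by
  simpa [← sub_eq_add_neg] using abs_add_rpow_le hp x (-y)

lemma exists_abs_abs_add_rpow_sub_le {p : ℝ} (hp : 0 ≤ p) {ε : ℝ} (hε : 0 < ε) :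
    ∃ C : ℝ, ∀ a b : ℝ, |(|a + b| ^ p - |a| ^ p)| ≤ ε * |a| ^ p + C * |b| ^ p := by
  have hcont : ContinuousAt (fun t : ℝ => |1 + t| ^ p) 0 :=
    ((continuous_abs.comp (continuous_const_add 1)).rpow_const fun _ => Or.inr hp).continuousAt
  obtain ⟨δ, hδ, hnear⟩ := Metric.continuousAt_iff.1 hcont ε hε
  refine ⟨(2 ^ p + 1) * δ⁻¹ ^ p + 2 ^ p, fun a b => ?_⟩
  rcases lt_or_ge |b| (δ * |a|) with hba | hab
  · have ha : a ≠ 0 := by rintro rfl; simp at hba; linarith [abs_nonneg b]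
    -- homogeneity reduces the claim to the continuity of `t ↦ |1 + t| ^ p` at `0`
    have hscale : |a + b| ^ p = |a| ^ p * |1 + b / a| ^ p := by
      rw [← Real.mul_rpow (abs_nonneg _) (abs_nonneg _), ← abs_mul, mul_add, mul_one,
        mul_div_cancel₀ _ ha]
    have hclose : |(|1 + b / a| ^ p - 1)| < ε := by
      simpa [Real.dist_eq] using hnear (x := b / a)
        (by rwa [Real.dist_eq, sub_zero, abs_div, div_lt_iff₀ (abs_pos.2 ha)])
    calc |(|a + b| ^ p - |a| ^ p)| = |a| ^ p * |(|1 + b / a| ^ p - 1)| := by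
          rw [hscale, ← mul_sub_one, abs_mul, abs_of_nonneg (by positivity)]
      _ ≤ ε * |a| ^ p := by rw [mul_comm]; gcongr
      _ ≤ _ := le_add_of_nonneg_right (by positivity)
  · have ha : |a| ^ p ≤ δ⁻¹ ^ p * |b| ^ p := by
      rw [← Real.mul_rpow (by positivity) (abs_nonneg _)]
      gcongr
      rwa [inv_mul_eq_div, le_div_iff₀ hδ, mul_comm]
    calc |(|a + b| ^ p - |a| ^ p)| ≤ |a + b| ^ p + |a| ^ p :=
          abs_sub_le_of_nonneg_of_le (by positivity) (le_add_of_nonneg_right (by positivity))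
            (by positivity) (le_add_of_nonneg_left (by positivity))
      _ ≤ 2 ^ p * (|a| ^ p + |b| ^ p) + |a| ^ p := by gcongr; exact abs_add_rpow_le hp a b
      _ = (2 ^ p + 1) * |a| ^ p + 2 ^ p * |b| ^ p := by ring
      _ ≤ (2 ^ p + 1) * (δ⁻¹ ^ p * |b| ^ p) + 2 ^ p * |b| ^ p := by gcongr
      _ = ((2 ^ p + 1) * δ⁻¹ ^ p + 2 ^ p) * |b| ^ p := by ring
      _ ≤ _ := le_add_of_nonneg_left (by positivity)

lemma exists_abs_rpow_sub_abs_sub_rpow_sub_rpow_le {p : ℝ} (hp : 0 ≤ p) {ε : ℝ} (hε : 0 < ε) :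
    ∃ C : ℝ, ∀ a b : ℝ, |(|b| ^ p - |a - b| ^ p - |a| ^ p)| ≤ ε * |a - b| ^ p + C * |a| ^ p := by
  obtain ⟨C, hC⟩ := exists_abs_abs_add_rpow_sub_le hp hε
  refine ⟨C + 1, fun a b => ?_⟩
  have hab := hC (b - a) a
  rw [sub_add_cancel, abs_sub_comm b] at hab
  have := abs_sub (|b| ^ p - |a - b| ^ p) (|a| ^ p)
  rw [abs_of_nonneg (by positivity : (0 : ℝ) ≤ |a| ^ p)] at this
  linarith

lemma tendsto_abs_rpow_sub_abs_sub_rpow_sub_rpow {p : ℝ} (hp : 0 < p) {u : ℕ → ℝ} {a : ℝ}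
    (hu : Tendsto u atTop (𝓝 a)) :
    Tendsto (fun n => |u n| ^ p - |a - u n| ^ p - |a| ^ p) atTop (𝓝 0) := by
  have hdiff : Tendsto (fun n => |a - u n| ^ p) atTop (𝓝 0) := by
    simpa [Real.zero_rpow hp.ne'] using
      ((tendsto_const_nhds (x := a)).sub hu).abs.rpow_const (Or.inr hp.le)
  simpa using ((hu.abs.rpow_const (Or.inr hp.le)).sub hdiff).sub_const (|a| ^ p)

section

variable {X : Type*} [MeasurableSpace X] {μ : Measure X}

lemma integrable_of_tendsto_ae_of_integral_norm_le {E : Type*} [NormedAddCommGroup E]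
    {F : ℕ → X → E} {G : X → E} {C : ℝ} (hF : ∀ n, Integrable (F n) μ)
    (hC : ∀ n, ∫ x, ‖F n x‖ ∂μ ≤ C) (hlim : ∀ᵐ x ∂μ, Tendsto (fun n => F n x) atTop (𝓝 (G x))) :
    Integrable G μ := by
  have hG := aestronglyMeasurable_of_tendsto_ae _ (fun n => (hF n).1) hlim
  refine memLp_one_iff_integrable.1 ⟨hG, ?_⟩
  refine (Lp.eLpNorm_le_of_ae_tendsto (C := ENNReal.ofReal C) (Eventually.of_forall fun n => ?_)
    (fun n => (hF n).1) hlim).trans_lt ENNReal.ofReal_lt_top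
  rw [eLpNorm_one_eq_lintegral_enorm, ← ofReal_integral_norm_eq_lintegral_enorm (hF n)]
  exact ENNReal.ofReal_le_ofReal (hC n)

lemma integrable_abs_sub_rpow {p : ℝ} (hp : 0 ≤ p) {u v : X → ℝ}
    (hu : Integrable (fun x => |u x| ^ p) μ) (hv : Integrable (fun x => |v x| ^ p) μ)
    (huv : AEStronglyMeasurable (u - v) μ) : Integrable (fun x => |u x - v x| ^ p) μ :=
  ((hu.add hv).const_mul (2 ^ p)).mono'
    ((continuous_abs.rpow_const fun _ => Or.inr hp).comp_aestronglyMeasurable huv) <|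
    ae_of_all _ fun x => by
      rw [Real.norm_of_nonneg (by positivity)]
      exact abs_sub_rpow_le hp _ _

lemma integral_abs_sub_rpow_le {p : ℝ} (hp : 0 ≤ p) {u v : X → ℝ}
    (hu : Integrable (fun x => |u x| ^ p) μ) (hv : Integrable (fun x => |v x| ^ p) μ)
    (huv : AEStronglyMeasurable (u - v) μ) :
    ∫ x, |u x - v x| ^ p ∂μ ≤ 2 ^ p * (∫ x, |u x| ^ p ∂μ + ∫ x, |v x| ^ p ∂μ) := calc
  ∫ x, |u x - v x| ^ p ∂μ ≤ ∫ x, 2 ^ p * (|u x| ^ p + |v x| ^ p) ∂μ :=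
    integral_mono (integrable_abs_sub_rpow hp hu hv huv) ((hu.add hv).const_mul _)
      fun x => abs_sub_rpow_le hp _ _
  _ = _ := by rw [integral_const_mul, integral_add hu hv]

lemma tendsto_integral_zero_of_abs_le_mul_add {F U : ℕ → X → ℝ} {M : ℝ}
    (hF : ∀ n, Integrable (F n) μ) (hU : ∀ n, Integrable (U n) μ) (hU0 : ∀ n, 0 ≤ᵐ[μ] U n)
    (hUM : ∀ n, ∫ x, U n x ∂μ ≤ M) (hlim : ∀ᵐ x ∂μ, Tendsto (fun n => F n x) atTop (𝓝 0))
    (hdom : ∀ ε > 0, ∃ G : X → ℝ, Integrable G μ ∧ ∀ n, ∀ᵐ x ∂μ, |F n x| ≤ ε * U n x + G x) :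
    Tendsto (fun n => ∫ x, F n x ∂μ) atTop (𝓝 0) := by
  have hM : 0 ≤ M := (integral_nonneg_of_ae (hU0 0)).trans (hUM 0)
  have key : ∀ ε > 0, ∀ᶠ n in atTop, |∫ x, F n x ∂μ| ≤ ε * (M + 1) := by
    intro ε hε
    obtain ⟨G, hG, hFG⟩ := hdom ε hε
    have hmin : ∀ n, Integrable (fun x => min |F n x| |G x|) μ := fun n => (hF n).abs.inf hG.abs
    -- `min |F n| |G|` tends to `0` by dominated convergence and carries all of `|F n|` but `ε U n`
    have htrunc : Tendsto (fun n => ∫ x, min |F n x| |G x| ∂μ) atTop (𝓝 0) := by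
      simpa using tendsto_integral_of_dominated_convergence (f := fun _ => 0)
        (fun x => |G x|) (fun n => (hmin n).1) hG.abs
        (fun n => ae_of_all _ fun x => by simp [abs_of_nonneg])
        (hlim.mono fun x hx => by
          simpa [min_eq_left (abs_nonneg (G x))] using hx.abs.min (tendsto_const_nhds (x := |G x|)))
    filter_upwards [htrunc.eventually (eventually_le_nhds hε)] with n hn
    have hsplit : ∀ᵐ x ∂μ, |F n x| ≤ min |F n x| |G x| + ε * U n x := by
      filter_upwards [hFG n, hU0 n] with x hx hUx
      have := mul_nonneg hε.le hUx
      rcases le_total |F n x| |G x| with h | h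
      · rw [min_eq_left h]; linarith
      · rw [min_eq_right h]; linarith [le_abs_self (G x)]
    calc |∫ x, F n x ∂μ| ≤ ∫ x, |F n x| ∂μ := abs_integral_le_integral_abs
      _ ≤ ∫ x, (min |F n x| |G x| + ε * U n x) ∂μ :=
        integral_mono_ae (hF n).abs ((hmin n).add ((hU n).const_mul ε)) hsplit
      _ = ∫ x, min |F n x| |G x| ∂μ + ε * ∫ x, U n x ∂μ := by
        rw [integral_add (hmin n) ((hU n).const_mul ε), integral_const_mul]
      _ ≤ ε * (M + 1) := by nlinarith [hUM n]
  refine NormedAddGroup.tendsto_nhds_zero.2 fun η hη => ?_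
  filter_upwards [key (η / (2 * (M + 1))) (by positivity)] with n hn
  calc ‖∫ x, F n x ∂μ‖ ≤ η / (2 * (M + 1)) * (M + 1) := hn
    _ = η / 2 := by field_simp
    _ < η := half_lt_self hη

end

theorem stmt5_general {X : Type*} [MeasurableSpace X] (μ : Measure X)
    (p : ℝ) (hp : 1 ≤ p) (f : ℕ → X → ℝ) (g : X → ℝ)
    (hfmeas : ∀ n, Measurable (f n))
    (hae : ∀ᵐ x ∂μ, Tendsto (fun n => f n x) atTop (nhds (g x)))
    (hint : ∀ n, Integrable (fun x => |f n x| ^ p) μ)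
    (hbdd : ∃ C : ℝ, ∀ n, ∫ x, |f n x| ^ p ∂μ ≤ C) :
    Integrable (fun x => |g x| ^ p) μ ∧
      Tendsto (fun n => (∫ x, |f n x| ^ p ∂μ) - ∫ x, |g x - f n x| ^ p ∂μ) atTop
        (nhds (∫ x, |g x| ^ p ∂μ)) := by
  have hp0 : 0 < p := by linarith
  obtain ⟨C, hC⟩ := hbdd
  have hg : Integrable (fun x => |g x| ^ p) μ :=
    integrable_of_tendsto_ae_of_integral_norm_le hint
      (by simp_rw [Real.norm_of_nonneg (Real.rpow_nonneg (abs_nonneg _) _)]; exact hC)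
      (hae.mono fun x hx => hx.abs.rpow_const (Or.inr hp0.le))
  have hsub n : AEStronglyMeasurable (g - f n) μ :=
    (aestronglyMeasurable_of_tendsto_ae _ (fun n => (hfmeas n).aestronglyMeasurable) hae).sub
      (hfmeas n).aestronglyMeasurable
  have hdiff n : Integrable (fun x => |g x - f n x| ^ p) μ :=
    integrable_abs_sub_rpow hp0.le hg (hint n) (hsub n)
  have hlim : Tendsto (fun n => ∫ x, (|f n x| ^ p - |g x - f n x| ^ p - |g x| ^ p) ∂μ) atTop
      (𝓝 0) :=
    tendsto_integral_zero_of_abs_le_mul_add (M := 2 ^ p * (∫ x, |g x| ^ p ∂μ + C))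
      (fun n => ((hint n).sub (hdiff n)).sub hg) hdiff
      (fun n => ae_of_all _ fun x => by positivity)
      (fun n => (integral_abs_sub_rpow_le hp0.le hg (hint n) (hsub n)).trans
        (by gcongr; exact hC n))
      (hae.mono fun x hx => tendsto_abs_rpow_sub_abs_sub_rpow_sub_rpow hp0 hx)
      fun ε hε =>
        let ⟨K, hK⟩ := exists_abs_rpow_sub_abs_sub_rpow_sub_rpow_le hp0.le hε
        ⟨_, hg.const_mul K, fun n => ae_of_all _ fun x => hK (g x) (f n x)⟩
  refine ⟨hg, ?_⟩
  have := hlim.add_const (∫ x, |g x| ^ p ∂μ)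
  rw [zero_add] at this
  refine this.congr fun n => ?_
  have hdiffn : Integrable (fun x => |f n x| ^ p - |g x - f n x| ^ p) μ := (hint n).sub (hdiff n)
  rw [integral_sub hdiffn hg, integral_sub (hint n) (hdiff n)]
  ring

/-- Brezis–Lieb lemma: if `f_n → f` a.e. and `(f_n)` is bounded in
`L^p_μ(X)`, then `‖f_n‖_p^p − ‖f − f_n‖_p^p → ‖f‖_p^p`. -/
theorem stmt5 {X : Type*} [MeasurableSpace X] (μ : Measure X)
    (p : ℝ) (hp : 1 ≤ p) (f : ℕ → X → ℝ) (g : X → ℝ)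
    (hfmeas : ∀ n, Measurable (f n)) (hgmeas : Measurable g)
    (hae : ∀ᵐ x ∂μ, Tendsto (fun n => f n x) atTop (nhds (g x)))
    (hint : ∀ n, Integrable (fun x => |f n x| ^ p) μ)
    (hbdd : ∃ C : ℝ, ∀ n, ∫ x, |f n x| ^ p ∂μ ≤ C) :
    Integrable (fun x => |g x| ^ p) μ ∧
      Tendsto (fun n => (∫ x, |f n x| ^ p ∂μ) - ∫ x, |g x - f n x| ^ p ∂μ) atTop
        (nhds (∫ x, |g x| ^ p ∂μ)) :=
  stmt5_general μ p hp f g hfmeas hae hint hbdd
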